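/- For any tuple m ∈ ℤ^d that is partially successive, i.e., m_i = m_{i+1} − 1 = m_{i+2} − 2 for some 1 ≤ i ≤ d−2, the signed set of monotone triangles with bottom row m is empty: MT(m) = (∅,∅); in particular #MT(m) = 0. -/
import Mathlib


/-- `δ↖` of an arrow: arrows are encoded as `0 = ↖`, `1 = ↗`, `2 = ↖↗`. -/
def dl (x : Fin 3) : ℤ := if x = 1 then 0 else 1

/-- `δ↗` of an arrow. -/
def dr (x : Fin 3) : ℤ := if x = 0 then 0 else 1

/-- The sign of `x` as an element of the signed half-open interval `[p, q)`
(`0` if `x` does not lie in it). -/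
def wsign (p q x : ℤ) : ℤ :=
  if p ≤ x ∧ x < q then 1 else if q ≤ x ∧ x < p then -1 else 0

/-- The signed count `#𝓜_{k,l}` of arrow rows `μ ∈ AR_d` (with sign `(−1)^{#↖↗}`)
such that `l` lies in
`μ(k) = [k₁+δ↗(μ₁), k₂−δ↖(μ₂)) × ⋯ × [k_{d−1}+δ↗(μ_{d−1}), k_d−δ↖(μ_d))`,
each `l` counted with its sign in `μ(k)`. -/
def Mcount (d : ℕ) (k l : ℕ → ℤ) : ℤ :=
  ∑ μ : Fin d → Fin 3,
    (-1) ^ (Finset.univ.filter (fun i => μ i = 2)).card *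
      ∏ i : Fin (d - 1),
        wsign (k i.1 + dr (μ ⟨i.1, lt_of_lt_of_le i.isLt (Nat.sub_le d 1)⟩))
              (k (i.1 + 1) - dl (μ ⟨i.1 + 1, by have := i.isLt; omega⟩))
              (l i.1)

/-! ### Auxiliary development: a transfer recursion computing `Mcount` -/

def sgn3 (x : Fin 3) : ℤ := if x = 2 then -1 else 1

/-- The transfer recursion: `F k l n ν` is the signed sum over arrow rows
`μ₀,…,μ_{n-1}` of the first `n` interval factors, with boundary arrow `ν`
playing the role of `μ_n`. -/
def F (k l : ℕ → ℤ) : ℕ → Fin 3 → ℤ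
  | 0, _ => 1
  | n+1, ν => ∑ μ : Fin 3, sgn3 μ * F k l n μ * wsign (k n + dr μ) (k (n+1) - dl ν) (l n)

lemma wsign_diff (p q z : ℤ) : wsign p q z - wsign (p+1) q z = if z = p then 1 else 0 := by
  unfold wsign; split_ifs <;> omega

lemma dl_cases (ν : Fin 3) : dl ν = 0 ∨ dl ν = 1 := by fin_cases ν <;> simp [dl]

lemma F_two (k l : ℕ → ℤ) (n : ℕ) : F k l n 2 = F k l n 0 := by
  cases n with
  | zero => rfl
  | succ n =>
    have h : dl 2 = dl 0 := by decide
    simp only [F, h]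

lemma F_succ (k l : ℕ → ℤ) (n : ℕ) (ν : Fin 3) :
    F k l (n+1) ν = (if l n = k n then F k l n 0 else 0)
      + F k l n 1 * wsign (k n + 1) (k (n+1) - dl ν) (l n) := by
  have h := wsign_diff (k n) (k (n+1) - dl ν) (l n)
  simp only [F, Fin.sum_univ_three]
  have h0 : sgn3 0 = 1 := by decide
  have h1 : sgn3 1 = 1 := by decide
  have h2 : sgn3 2 = -1 := by decide
  have d0 : dr 0 = 0 := by decide
  have d1 : dr 1 = 1 := by decide
  have d2 : dr 2 = 1 := by decide
  rw [h0, h1, h2, d0, d1, d2, F_two]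
  rw [add_zero] at *
  split_ifs at h ⊢ with hz
  · linear_combination (F k l n 0) * h
  · linear_combination (F k l n 0) * h

lemma F_zero_propagate (k l : ℕ → ℤ) (n : ℕ) (h : ∀ ν, F k l n ν = 0) :
    ∀ m, n ≤ m → ∀ ν, F k l m ν = 0 := by
  intro m hm
  induction m, hm using Nat.le_induction with
  | base => exact h
  | succ m hm ih =>
    intro ν
    simp only [F]
    exact Finset.sum_eq_zero fun μ _ => by rw [ih μ]; ring

/-- Same as `F`, in explicit summation form. -/
def G (k l : ℕ → ℤ) (n : ℕ) (ν : Fin 3) : ℤ :=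
  ∑ p : Fin n → Fin 3, (∏ j, sgn3 (p j)) *
    ∏ i : Fin n, wsign (k i.1 + dr (p i))
      (k (i.1+1) - dl (if h : i.1+1 < n then p ⟨i.1+1, h⟩ else ν)) (l i.1)

lemma sgn_prod (dd : ℕ) (μ : Fin dd → Fin 3) :
    (-1:ℤ) ^ (Finset.univ.filter (fun i => μ i = 2)).card = ∏ j, sgn3 (μ j) := by
  simp only [sgn3]
  rw [← Finset.prod_filter, Finset.prod_const]

/-- Splitting a sum over `Fin (n+1) → Fin 3` via `Fin.snoc`. -/
lemma sum_snoc (n : ℕ) (f : (Fin (n+1) → Fin 3) → ℤ) :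
    ∑ μ, f μ = ∑ α : Fin 3, ∑ p : Fin n → Fin 3, f (Fin.snoc p α) := by
  have h1 : ∑ μ, f μ = ∑ x : Fin 3 × (Fin n → Fin 3), f (Fin.snoc x.2 x.1) :=
    (Fintype.sum_equiv (Fin.snocEquiv (fun _ => Fin 3)) _ _ (fun x => rfl)).symm
  rw [h1, Fintype.sum_prod_type]

lemma snoc_mk_lt {n : ℕ} (p : Fin n → Fin 3) (α : Fin 3) (v : ℕ) (h : v < n) (h' : v < n + 1) :
    (Fin.snoc p α : Fin (n+1) → Fin 3) ⟨v, h'⟩ = p ⟨v, h⟩ := by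
  have : (⟨v, h'⟩ : Fin (n+1)) = Fin.castSucc ⟨v, h⟩ := rfl
  rw [this, Fin.snoc_castSucc]

lemma G_succ (k l : ℕ → ℤ) (n : ℕ) (ν : Fin 3) :
    G k l (n+1) ν = ∑ α : Fin 3, sgn3 α * G k l n α *
      wsign (k n + dr α) (k (n+1) - dl ν) (l n) := by
  simp only [G]
  rw [sum_snoc]
  refine Finset.sum_congr rfl fun α _ => ?_
  rw [Finset.mul_sum, Finset.sum_mul]
  refine Finset.sum_congr rfl fun p _ => ?_
  have hsg : (∏ j, sgn3 ((Fin.snoc p α : Fin (n+1) → Fin 3) j)) = (∏ j, sgn3 (p j)) * sgn3 α := by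
    rw [Fin.prod_univ_castSucc]
    simp [Fin.snoc_castSucc, Fin.snoc_last]
  have hpr : (∏ i : Fin (n+1), wsign (k i.1 + dr ((Fin.snoc p α : Fin (n+1) → Fin 3) i))
      (k (i.1+1) - dl (if h : i.1+1 < n+1 then (Fin.snoc p α : Fin (n+1) → Fin 3) ⟨i.1+1, h⟩ else ν)) (l i.1))
      = (∏ i : Fin n, wsign (k i.1 + dr (p i))
          (k (i.1+1) - dl (if h : i.1+1 < n then p ⟨i.1+1, h⟩ else α)) (l i.1)) *
        wsign (k n + dr α) (k (n+1) - dl ν) (l n) := by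
    rw [Fin.prod_univ_castSucc]
    congr 1
    · refine Finset.prod_congr rfl fun i _ => ?_
      have h1 : (Fin.castSucc i).1 = i.1 := rfl
      rw [h1]
      have h2 : (Fin.snoc p α : Fin (n+1) → Fin 3) (Fin.castSucc i) = p i := Fin.snoc_castSucc _ _ _
      rw [h2]
      congr 2
      have hi : i.1 + 1 < n + 1 := by omega
      rw [dif_pos hi]
      by_cases hc : i.1 + 1 < n
      · rw [dif_pos hc, snoc_mk_lt p α _ hc]
      · rw [dif_neg hc]
        have he : (⟨i.1+1, hi⟩ : Fin (n+1)) = Fin.last n := by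
          apply Fin.ext; simp only [Fin.val_last]; omega
        rw [he, Fin.snoc_last]
    · have h1 : (Fin.last n).1 = n := rfl
      rw [h1]
      have h2 : (Fin.snoc p α : Fin (n+1) → Fin 3) (Fin.last n) = α := Fin.snoc_last _ _
      rw [h2]
      congr 2
      rw [dif_neg (by omega)]
  rw [hsg, hpr]
  ring

lemma G_eq_F (k l : ℕ → ℤ) (n : ℕ) (ν : Fin 3) : G k l n ν = F k l n ν := by
  induction n generalizing ν with
  | zero => simp [G, F]
  | succ n ih =>
    rw [G_succ, F]
    exact Finset.sum_congr rfl fun α _ => by rw [ih]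

lemma Mcount_eq (n : ℕ) (k l : ℕ → ℤ) :
    Mcount (n+1) k l = ∑ ν : Fin 3, sgn3 ν * G k l n ν := by
  show (∑ μ : Fin (n+1) → Fin 3,
      (-1) ^ (Finset.univ.filter (fun i => μ i = 2)).card *
        ∏ i : Fin n, wsign (k i.1 + dr (μ ⟨i.1, by omega⟩))
          (k (i.1+1) - dl (μ ⟨i.1+1, by omega⟩)) (l i.1)) = _
  rw [sum_snoc]
  refine Finset.sum_congr rfl fun α _ => ?_
  rw [G, Finset.mul_sum]
  refine Finset.sum_congr rfl fun p _ => ?_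
  rw [sgn_prod]
  have hsg : (∏ j, sgn3 ((Fin.snoc p α : Fin (n+1) → Fin 3) j)) = (∏ j, sgn3 (p j)) * sgn3 α := by
    rw [Fin.prod_univ_castSucc]
    simp [Fin.snoc_castSucc, Fin.snoc_last]
  rw [hsg]
  have hpr : (∏ i : Fin n, wsign (k i.1 + dr ((Fin.snoc p α : Fin (n+1) → Fin 3) ⟨i.1, by omega⟩))
      (k (i.1+1) - dl ((Fin.snoc p α : Fin (n+1) → Fin 3) ⟨i.1+1, by omega⟩)) (l i.1))
      = ∏ i : Fin n, wsign (k i.1 + dr (p i))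
          (k (i.1+1) - dl (if h : i.1+1 < n then p ⟨i.1+1, h⟩ else α)) (l i.1) := by
    refine Finset.prod_congr rfl fun i _ => ?_
    rw [snoc_mk_lt p α i.1 i.isLt]
    congr 2
  rw [hpr]
  ring

/-- `Mcount` is computed by the transfer recursion. -/
lemma Mcount_F (n : ℕ) (k l : ℕ → ℤ) : Mcount (n+1) k l = F k l n 1 := by
  rw [Mcount_eq, Fin.sum_univ_three]
  simp only [G_eq_F]
  rw [F_two]
  have h0 : sgn3 0 = 1 := by decide
  have h1 : sgn3 1 = 1 := by decide
  have h2 : sgn3 2 = -1 := by decide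
  rw [h0, h1, h2]; ring

/-- Key lemma: a successive triple in `k` forces a successive triple in `l`
(one row up) whenever `Mcount d k l ≠ 0`. -/
lemma triple_down (d i : ℕ) (k l : ℕ → ℤ) (hd : i + 2 < d)
    (h1 : k i = k (i+1) - 1) (h2 : k i = k (i+2) - 2)
    (hM : Mcount d k l ≠ 0) :
    ∃ j, j + 2 < d - 1 ∧ l j = l (j+1) - 1 ∧ l j = l (j+2) - 2 := by
  obtain ⟨n, rfl⟩ : ∃ n, d = n + 1 := ⟨d-1, by omega⟩
  rw [Mcount_F] at hM
  have hin : i + 2 ≤ n := by omega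
  have prop : ∀ ms, ms ≤ n → (∀ ν, F k l ms ν = 0) → False := fun ms hms hz =>
    hM (F_zero_propagate k l ms hz n hms 1)
  have hk1 : k (i+1) = k i + 1 := by omega
  have hk2 : k (i+2) = k i + 2 := by omega
  -- Step 1: `l i = k i` is forced.
  have hli : l i = k i := by
    by_contra hne
    refine prop (i+1) (by omega) fun ν => ?_
    rw [F_succ, if_neg hne, hk1]
    have hw : wsign (k i + 1) (k i + 1 - dl ν) (l i) = 0 := by
      rcases dl_cases ν with h | h <;> rw [h] <;> (unfold wsign; split_ifs <;> omega)
    rw [hw]; ring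
  -- Step 2: `l (i+1) = k i + 1` is forced.
  have hli2 : l (i+1) = k i + 1 := by
    by_contra hne
    refine prop (i+2) (by omega) fun ν => ?_
    rw [F_succ, if_neg (by rw [hk1]; exact hne)]
    have hw : wsign (k (i+1) + 1) (k (i+2) - dl ν) (l (i+1)) = 0 := by
      rw [hk1, hk2]
      rcases dl_cases ν with h | h <;> rw [h] <;> (unfold wsign; split_ifs <;> omega)
    rw [hw]; ring
  -- The two neighbouring possibilities for a triple in `l`.
  by_cases hA : 0 < i ∧ l (i-1) = k i - 1
  · obtain ⟨hp, hv⟩ := hA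
    refine ⟨i-1, by omega, ?_, ?_⟩
    · rw [show i-1+1 = i by omega]; omega
    · rw [show i-1+2 = i+1 by omega]; omega
  by_cases hB : i + 2 < n ∧ l (i+2) = k i + 2
  · exact ⟨i, hB.1, by omega, by omega⟩
  exfalso
  -- `F i 0 − F i 1 = 0` since `l (i−1) ≠ k i − 1` (or `i = 0`).
  have hdiff : F k l i 0 = F k l i 1 := by
    rcases Nat.eq_zero_or_pos i with h0 | hpos
    · subst h0; rfl
    · obtain ⟨j, rfl⟩ : ∃ j, i = j + 1 := ⟨i-1, by omega⟩
      have hlj : l j ≠ k (j+1) - 1 := fun hc => hA ⟨by omega, by simpa using hc⟩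
      have hw : wsign (k j + 1) (k (j+1) - dl 0) (l j) = wsign (k j + 1) (k (j+1) - dl 1) (l j) := by
        rw [show dl 0 = 1 by decide, show dl 1 = 0 by decide]
        unfold wsign; split_ifs <;> omega
      rw [F_succ, F_succ, hw]
  -- Hence `F (i+2) 1 = 0`.
  have hF11 : F k l (i+1) 1 = F k l i 0 := by
    rw [F_succ, if_pos hli, hk1, show dl 1 = 0 by decide]
    have hw : wsign (k i + 1) (k i + 1 - 0) (l i) = 0 := by
      unfold wsign; split_ifs <;> omega
    rw [hw]; ring
  have hF10 : F k l (i+1) 0 = F k l i 0 - F k l i 1 := by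
    rw [F_succ, if_pos hli, hk1, show dl 0 = 1 by decide]
    have hw : wsign (k i + 1) (k i + 1 - 1) (l i) = -1 := by
      unfold wsign; split_ifs <;> omega
    rw [hw]; ring
  have hF21 : F k l (i+2) 1 = 0 := by
    rw [F_succ, if_pos (by rw [hk1]; exact hli2), hF10, hF11, hk1, hk2,
      show dl 1 = 0 by decide]
    have hw : wsign (k i + 1 + 1) (k i + 2 - 0) (l (i+1)) = 0 := by
      unfold wsign; split_ifs <;> omega
    rw [hw, hdiff]; ring
  rcases eq_or_lt_of_le hin with he | hlt
  · exact hM (by rw [← he]; exact hF21)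
  · refine prop (i+3) (by omega) fun ν => ?_
    have hne3 : ¬ (l (i+2) = k (i+2)) := by rw [hk2]; exact fun hc => hB ⟨hlt, hc⟩
    rw [show i+3 = (i+2)+1 by omega, F_succ, if_neg hne3, hF21]; ring

/-- For any partially successive bottom row `m ∈ ℤ^d` (i.e. with
`mᵢ = mᵢ₊₁ − 1 = mᵢ₊₂ − 2` for some `i`), the signed set of monotone triangles with
bottom row `m` is empty: there is no triangular array `t` with rows
`t 0, t 1, …, t (d−1) = m` (row `r` of length `r+1`) such that consecutive rows satisfy
`t r ≺' t (r+1)`, i.e. `#𝓜_{t(r+1), t(r)} ≠ 0`; in particular `#MT(m) = 0`. -/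
theorem mt_empty_of_partially_successive (d : ℕ) (m : ℕ → ℤ)
    (hps : ∃ i, i + 2 < d ∧ m i = m (i + 1) - 1 ∧ m i = m (i + 2) - 2) :
    ¬ ∃ t : ℕ → ℕ → ℤ, (∀ j < d, t (d - 1) j = m j) ∧
        (∀ r, r + 1 < d → Mcount (r + 2) (t (r + 1)) (t r) ≠ 0) := by
  rintro ⟨t, htop, hstep⟩
  obtain ⟨i, hi, h1, h2⟩ := hps
  have key : ∀ r, r < d → ∀ j, j + 2 < r + 1 →
      t r j = t r (j+1) - 1 → t r j = t r (j+2) - 2 → False := by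
    intro r
    induction r with
    | zero => intro _ j hj; exact absurd hj (by omega)
    | succ r ih =>
      intro hr j hj hj1 hj2
      obtain ⟨j', hj', e1, e2⟩ :=
        triple_down (r+2) j (t (r+1)) (t r) (by omega) hj1 hj2 (hstep r (by omega))
      exact ih (by omega) j' (by omega) e1 e2
  have hd0 : 0 < d := by omega
  refine key (d-1) (by omega) i (by omega) ?_ ?_
  · rw [htop i (by omega), htop (i+1) (by omega)]; exact h1
  · rw [htop i (by omega), htop (i+2) (by omega)]; exact h2
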